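/- arXiv:1207.5381 — 2 statements merged into one kernel-verified Lean document; each statement's English description precedes it below -/
import Mathlib

section
/- Let Δ be a banner d-dimensional simplicial pseudomanifold and x a vertex of Δ. Then the subgraph of the 1-skeleton of Δ induced on the set of vertices not in N(x) (i.e., neither x nor adjacent to x) is connected and nonempty. -/
open Finset

variable {V : Type*} [DecidableEq V]

/-- A (finite abstract) simplicial complex: a nonempty, downward closed family of finite
vertex sets (the empty face is always included). -/
def IsComplex (K : Set (Finset V)) : Prop :=
  K.Nonempty ∧ ∀ σ ∈ K, ∀ τ : Finset V, τ ⊆ σ → τ ∈ K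

/-- A facet: a face maximal under inclusion. -/
def IsFacet (K : Set (Finset V)) (F : Finset V) : Prop :=
  F ∈ K ∧ ∀ G ∈ K, F ⊆ G → G = F

/-- PureCplx of dimension `d`: every face is contained in a facet and all facets have `d+1` vertices. -/
def PureCplx (K : Set (Finset V)) (d : ℕ) : Prop :=
  (∀ σ ∈ K, ∃ F, IsFacet K F ∧ σ ⊆ F) ∧ ∀ F, IsFacet K F → F.card = d + 1

def IsVertex (K : Set (Finset V)) (x : V) : Prop := ({x} : Finset V) ∈ K

/-- The 1-skeleton graph of a complex (on the ambient vertex type). -/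
def skeleton (K : Set (Finset V)) : SimpleGraph V where
  Adj x y := x ≠ y ∧ ({x, y} : Finset V) ∈ K
  symm := by
    refine ⟨fun x y h => ?_⟩
    exact ⟨h.1.symm, by rw [Finset.pair_comm]; exact h.2⟩
  loopless := ⟨fun x h => h.1 rfl⟩

/-- A clique of the 1-skeleton of `K`. -/
def IsCliqueIn (K : Set (Finset V)) (T : Finset V) : Prop :=
  ∀ u ∈ T, ∀ v ∈ T, u ≠ v → ({u, v} : Finset V) ∈ K

/-- A critical clique: removing some vertex yields a face. -/
def IsCritical (K : Set (Finset V)) (T : Finset V) : Prop :=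
  ∃ v ∈ T, T.erase v ∈ K

/-- `K` contains the boundary complex of a `(d+1)`-simplex as a subcomplex. -/
def ContainsSimplexBoundary (K : Set (Finset V)) (d : ℕ) : Prop :=
  ∃ S : Finset V, S.card = d + 2 ∧ ∀ τ : Finset V, τ ⊆ S → τ ≠ S → τ ∈ K

/-- Banner (for a pure `d`-complex): every critical `(d+1)`-clique is spanning and no
boundary of a `(d+1)`-simplex occurs as a subcomplex. -/
def Banner (K : Set (Finset V)) (d : ℕ) : Prop :=
  (∀ T : Finset V, IsCliqueIn K T → T.card = d + 1 → IsCritical K T → T ∈ K) ∧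
    ¬ ContainsSimplexBoundary K d

/-- Strongly banner: every `(d+1)`-clique is spanning and no boundary of a `(d+1)`-simplex
occurs as a subcomplex. -/
def StronglyBanner (K : Set (Finset V)) (d : ℕ) : Prop :=
  (∀ T : Finset V, IsCliqueIn K T → T.card = d + 1 → T ∈ K) ∧
    ¬ ContainsSimplexBoundary K d

/-- FlagCplx: every clique of the 1-skeleton is a face. -/
def FlagCplx (K : Set (Finset V)) : Prop :=
  ∀ T : Finset V, IsCliqueIn K T → T ∈ K

/-- The link of a face `σ`. -/
def link (K : Set (Finset V)) (σ : Finset V) : Set (Finset V) :=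
  {τ : Finset V | Disjoint τ σ ∧ τ ∪ σ ∈ K}

/-- The facet graph of a pure `d`-complex: facets adjacent when they share a `(d-1)`-face
(i.e. their intersection has `d` vertices). -/
def facetGraph (K : Set (Finset V)) (d : ℕ) : SimpleGraph {F : Finset V // IsFacet K F} where
  Adj F G := F ≠ G ∧ ((F : Finset V) ∩ (G : Finset V)).card = d
  symm := by
    refine ⟨fun F G h => ?_⟩
    exact ⟨h.1.symm, by rw [Finset.inter_comm]; exact h.2⟩
  loopless := ⟨fun F h => h.1 rfl⟩

/-- Strong connectivity: the facet graph is connected. -/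
def StronglyConnected (K : Set (Finset V)) (d : ℕ) : Prop :=
  (facetGraph K d).Connected

/-- A `d`-dimensional pseudomanifold: pure `d`-complex, every `(d-1)`-face is in exactly
two facets, and the facet graph is connected. -/
def Pseudomanifold (K : Set (Finset V)) (d : ℕ) : Prop :=
  IsComplex K ∧ PureCplx K d ∧
    (∀ σ ∈ K, σ.card = d → {F : Finset V | IsFacet K F ∧ σ ⊆ F}.ncard = 2) ∧
    StronglyConnected K d

/-- Connectivity of a complex: the 1-skeleton induced on its vertex set is connected. -/
def ComplexConnected (K : Set (Finset V)) : Prop :=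
  ((skeleton K).induce {x : V | IsVertex K x}).Connected

/-- A normal pseudomanifold: all links of faces of dimension at least one are connected. -/
def NormalPM (K : Set (Finset V)) (d : ℕ) : Prop :=
  Pseudomanifold K d ∧ ∀ σ ∈ K, σ.card + 1 ≤ d → ComplexConnected (link K σ)

/-- The closed neighborhood `N(x)`: `x` together with its neighbors. -/
def closedNbhd (K : Set (Finset V)) (x : V) : Set V :=
  {x} ∪ {z : V | ({x, z} : Finset V) ∈ K}

/-- The subcomplex induced on a set `A` of vertices. -/
def inducedSub (K : Set (Finset V)) (A : Set V) : Set (Finset V) :=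
  {σ ∈ K | ∀ v ∈ σ, v ∈ A}

/-- The antistar of a vertex: the induced subcomplex on all other vertices. -/
def antistar (K : Set (Finset V)) (x : V) : Set (Finset V) :=
  {σ ∈ K | x ∉ σ}

/-- `K` is the boundary of a triangle, i.e. the 3-cycle `C₃`. -/
def IsC3 (K : Set (Finset V)) : Prop :=
  ∃ a b c : V, a ≠ b ∧ a ≠ c ∧ b ≠ c ∧
    K = {τ : Finset V | τ ⊆ ({a, b, c} : Finset V) ∧ τ ≠ ({a, b, c} : Finset V)}

/-- The banner number of a pure `d`-complex. -/
noncomputable def bannerNumber (K : Set (Finset V)) (d : ℕ) : ℕ :=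
  sInf {j : ℕ | ∀ σ ∈ K, σ.card = j → Banner (link K σ) (d - j) ∨ IsC3 (link K σ)}

/-- `k`-connectivity of a graph: more than `k` vertices, and removing fewer than `k`
vertices leaves it connected. -/
def KConnected {W : Type*} [Fintype W] [DecidableEq W] (G : SimpleGraph W) (k : ℕ) : Prop :=
  k < Fintype.card W ∧
    ∀ S : Finset W, S.card < k → (G.induce ((↑S : Set W)ᶜ)).Connected

/-- Existence of `k` pairwise independent `u`–`v` paths: paths sharing no vertices other
than `u` and `v`. -/
def IndepPaths {W : Type*} (G : SimpleGraph W) (u v : W) (k : ℕ) : Prop :=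
  ∃ p : Fin k → G.Walk u v, (∀ i, (p i).IsPath) ∧
    ∀ i j, i ≠ j → ∀ w : W, w ∈ (p i).support → w ∈ (p j).support → w = u ∨ w = v


/-!
Every vertex outside `N(x)` lies in a facet avoiding `x`, and by Barnette's lemma any two facets
avoiding `x` are joined by a chain of such facets, consecutive ones sharing a ridge. Bannerness
puts a vertex outside `N(x)` into every facet and every shared ridge of that chain: otherwise
adding `x` would create the boundary of a `(d+1)`-simplex, respectively a third facet on the
ridge. Walking along the chain through these vertices connects any two vertices outside `N(x)`.

Barnette's lemma is proved by lifting a walk in the facet graph, replacing each facet containing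
`x` by the facet across its ridge opposite `x`. When two consecutive facets `H`, `H'` both
contain `x`, the link of `(H ∩ H') \ {x}` is a disjoint union of cycles; going around its cycle
through `x` the other way yields a chain of facets avoiding `x`.
-/

namespace SimpleGraph

variable {W : Type*} [Fintype W] {G : SimpleGraph W} [DecidableRel G.Adj]

/-- The handshake lemma, applied to the connected component of `v`. -/
theorem exists_reachable_odd_degree {v : W} (hv : Odd (G.degree v)) :
    ∃ w ≠ v, G.Reachable v w ∧ Odd (G.degree w) := by
  classical
  let C : SimpleGraph W :=
    { Adj a b := G.Adj a b ∧ G.Reachable v a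
      symm := ⟨fun a b h => ⟨h.1.symm, h.2.trans h.1.reachable⟩⟩ }
  have hdeg : ∀ a, C.degree a = if G.Reachable v a then G.degree a else 0 := by
    intro a
    rw [← card_neighborFinset_eq_degree, ← card_neighborFinset_eq_degree]
    split_ifs with ha
    · congr 1; ext b; simp [C, ha]
    · rw [Finset.card_eq_zero]; ext b; simp [C, ha]
  obtain ⟨w, hwv, hw⟩ :=
    C.exists_ne_odd_degree_of_exists_odd_degree v (by simpa [hdeg] using hv)
  by_cases hvw : G.Reachable v w
  · exact ⟨w, hwv, hvw, by simpa [hdeg, hvw] using hw⟩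
  · simp [hdeg, hvw] at hw

variable [DecidableEq W]

theorem degree_deleteIncidenceSet_of_ne {x v : W} (hv : v ≠ x) :
    (G.deleteIncidenceSet x).degree v = ((G.neighborFinset v).erase x).card := by
  rw [← card_neighborFinset_eq_degree]
  congr 1
  ext w
  simp [deleteIncidenceSet_adj, hv, and_comm]

theorem reachable_deleteIncidenceSet_of_degree_zero_or_two
    (hdeg : ∀ v, G.degree v = 0 ∨ G.degree v = 2) {x f g : W}
    (hf : G.Adj x f) (hg : G.Adj x g) (hfg : f ≠ g) :
    (G.deleteIncidenceSet x).Reachable f g := by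
  have hnx : G.neighborFinset x = {f, g} := by
    refine (Finset.eq_of_subset_of_card_le ?_ ?_).symm
    · simp [Finset.insert_subset_iff, hf, hg]
    · rw [card_neighborFinset_eq_degree, Finset.card_pair hfg]
      rcases hdeg x with h | h
      · exact absurd h ((G.degree_pos_iff_exists_adj x).mpr ⟨f, hf⟩).ne'
      · exact h.le
  have hodd : ∀ v ≠ x, Odd ((G.deleteIncidenceSet x).degree v) → v = f ∨ v = g := by
    intro v hvx hv
    have hvx' : G.Adj v x := by
      by_contra h
      rw [degree_deleteIncidenceSet_of_ne hvx, Finset.erase_eq_of_notMem (by simpa using h),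
        card_neighborFinset_eq_degree] at hv
      rcases hdeg v with h | h <;> rw [h] at hv <;> exact absurd hv (by decide)
    simpa [hnx] using (G.mem_neighborFinset x v).mpr hvx'.symm
  have hf1 : (G.deleteIncidenceSet x).degree f = 1 := by
    rw [degree_deleteIncidenceSet_of_ne hf.ne.symm,
      Finset.card_erase_of_mem (by simpa using hf.symm), card_neighborFinset_eq_degree]
    rcases hdeg f with h | h
    · exact absurd h ((G.degree_pos_iff_exists_adj f).mpr ⟨x, hf.symm⟩).ne'
    · rw [h]
  obtain ⟨w, hwf, hfw, hw⟩ := exists_reachable_odd_degree (hf1 ▸ odd_one)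
  have hwx : w ≠ x := by
    rintro rfl
    rw [← card_neighborFinset_eq_degree,
      Finset.card_eq_zero.mpr (by ext; simp [deleteIncidenceSet_adj])] at hw
    exact Nat.not_odd_zero hw
  rcases hodd w hwx hw with rfl | rfl
  · exact absurd rfl hwf
  · exact hfw

end SimpleGraph

variable {K : Set (Finset V)} {d : ℕ} {x : V}

theorem mem_closedNbhd {z : V} : z ∈ closedNbhd K x ↔ z = x ∨ ({x, z} : Finset V) ∈ K := by
  simp [closedNbhd]

def antistarFacetGraph (K : Set (Finset V)) (d : ℕ) (x : V) : SimpleGraph (Finset V) where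
  Adj P Q := P ≠ Q ∧ IsFacet K P ∧ IsFacet K Q ∧ x ∉ P ∧ x ∉ Q ∧ (P ∩ Q).card = d
  symm := ⟨fun _ _ ⟨hPQ, hP, hQ, hxP, hxQ, h⟩ =>
    ⟨hPQ.symm, hQ, hP, hxQ, hxP, by rwa [Finset.inter_comm]⟩⟩

/-- For a face `π` of codimension two this is the 1-skeleton of the link of `π`. -/
def linkGraph (K : Set (Finset V)) (π : Finset V) : SimpleGraph V where
  Adj v w := v ≠ w ∧ v ∉ π ∧ w ∉ π ∧ IsFacet K (insert v (insert w π))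
  symm := ⟨fun _ _ ⟨hvw, hv, hw, h⟩ => ⟨hvw.symm, hw, hv, by rwa [Finset.insert_comm]⟩⟩

theorem containsSimplexBoundary_of_erase_mem (hK : IsComplex K) {S : Finset V}
    (hS : S.card = d + 2) (h : ∀ v ∈ S, S.erase v ∈ K) : ContainsSimplexBoundary K d := by
  refine ⟨S, hS, fun τ hτS hτ => ?_⟩
  obtain ⟨v, hv, hτv⟩ := Finset.ssubset_iff_exists_subset_erase.mp (hτS.ssubset_of_ne hτ)
  exact hK.2 _ (h v hv) τ hτv

theorem Banner.insert_mem_of_subset_closedNbhd (hK : IsComplex K) (hb : Banner K d)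
    {σ : Finset V} (hσ : σ ∈ K) (hcard : σ.card = d) (hxσ : x ∉ σ)
    (hσx : (σ : Set V) ⊆ closedNbhd K x) : insert x σ ∈ K := by
  refine hb.1 _ (fun u hu v hv huv => ?_) (by rw [Finset.card_insert_of_notMem hxσ, hcard])
    ⟨x, Finset.mem_insert_self x σ, by rwa [Finset.erase_insert hxσ]⟩
  have hx : ∀ w ∈ σ, ({x, w} : Finset V) ∈ K := fun w hw =>
    (mem_closedNbhd.mp (hσx hw)).resolve_left fun h => hxσ (h ▸ hw)
  rcases Finset.mem_insert.mp hu with rfl | hu <;> rcases Finset.mem_insert.mp hv with hvu | hv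
  · exact absurd hvu.symm huv
  · exact hx v hv
  · rw [hvu, Finset.pair_comm]; exact hx u hu
  · exact hK.2 σ hσ _ (by simp [Finset.insert_subset_iff, hu, hv])

theorem IsComplex.induce_skeleton_reachable_of_mem_face (hK : IsComplex K) {S : Set V}
    {σ : Finset V} (hσ : σ ∈ K) {z t : V} (hz : z ∈ S) (ht : t ∈ S) (hzσ : z ∈ σ) (htσ : t ∈ σ) :
    ((skeleton K).induce S).Reachable ⟨z, hz⟩ ⟨t, ht⟩ := by
  by_cases hzt : z = t
  · subst hzt; rfl
  exact SimpleGraph.Adj.reachable (G := (skeleton K).induce S)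
    ⟨hzt, hK.2 σ hσ _ (Finset.insert_subset hzσ (Finset.singleton_subset_iff.mpr htσ))⟩

namespace Pseudomanifold

theorem card_facet (hpm : Pseudomanifold K d) {F : Finset V} (hF : IsFacet K F) :
    F.card = d + 1 :=
  hpm.2.1.2 F hF

theorem isFacet_of_card (hpm : Pseudomanifold K d) {σ : Finset V} (hσ : σ ∈ K)
    (hcard : σ.card = d + 1) : IsFacet K σ := by
  obtain ⟨F, hF, hσF⟩ := hpm.2.1.1 σ hσ
  rwa [Finset.eq_of_subset_of_card_le hσF (by rw [hpm.card_facet hF, hcard])]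

theorem eq_of_ridge_subset (hpm : Pseudomanifold K d) {σ P Q R : Finset V} (hσ : σ ∈ K)
    (hcard : σ.card = d) (hP : IsFacet K P) (hQ : IsFacet K Q) (hR : IsFacet K R)
    (hσP : σ ⊆ P) (hσQ : σ ⊆ Q) (hσR : σ ⊆ R) (hPR : P ≠ R) (hQR : Q ≠ R) : P = Q := by
  obtain ⟨A, B, hAB, hfacets⟩ := Set.ncard_eq_two.mp (hpm.2.2.1 σ hσ hcard)
  have mem : ∀ F, IsFacet K F → σ ⊆ F → F = A ∨ F = B := fun F hF hσF => by
    have h : F ∈ {F | IsFacet K F ∧ σ ⊆ F} := ⟨hF, hσF⟩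
    rwa [hfacets] at h
  rcases mem P hP hσP with rfl | rfl <;> rcases mem Q hQ hσQ with rfl | rfl <;>
    rcases mem R hR hσR with rfl | rfl <;> tauto

theorem exists_antistar_facet_superset_erase (hpm : Pseudomanifold K d) {H : Finset V}
    (hH : IsFacet K H) : ∃ A, IsFacet K A ∧ x ∉ A ∧ H.erase x ⊆ A := by
  by_cases hxH : x ∈ H
  swap
  · exact ⟨H, hH, hxH, Finset.erase_subset x H⟩
  have hσ : H.erase x ∈ K := hpm.1.2 H hH.1 _ (Finset.erase_subset x H)
  have hcard : (H.erase x).card = d := by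
    rw [Finset.card_erase_of_mem hxH, hpm.card_facet hH, Nat.add_sub_cancel]
  obtain ⟨A, ⟨hA, hσA⟩, hAH⟩ :=
    Set.exists_ne_of_one_lt_ncard (by rw [hpm.2.2.1 _ hσ hcard]; norm_num) H
  refine ⟨A, hA, fun hxA => hAH (hH.2 A hA.1 fun v hv => ?_), hσA⟩
  by_cases hvx : v = x
  · exact hvx ▸ hxA
  · exact hσA (Finset.mem_erase.mpr ⟨hvx, hv⟩)

theorem exists_antistar_facet_mem (hpm : Pseudomanifold K d) {v : V} (hv : IsVertex K v)
    (hvx : v ∉ closedNbhd K x) : ∃ F, IsFacet K F ∧ x ∉ F ∧ v ∈ F := by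
  obtain ⟨F, hF, hvF⟩ := hpm.2.1.1 _ hv
  refine ⟨F, hF, fun hxF => hvx (mem_closedNbhd.mpr (.inr ?_)),
    hvF (Finset.mem_singleton_self v)⟩
  exact hpm.1.2 F hF.1 _ (Finset.insert_subset hxF hvF)

theorem exists_mem_notMem_closedNbhd (hpm : Pseudomanifold K d) (hb : Banner K d)
    {F : Finset V} (hF : IsFacet K F) (hxF : x ∉ F) : ∃ z ∈ F, z ∉ closedNbhd K x := by
  by_contra! hFx
  refine hb.2 (containsSimplexBoundary_of_erase_mem hpm.1 (S := insert x F)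
    (by rw [Finset.card_insert_of_notMem hxF, hpm.card_facet hF]) fun v hv => ?_)
  rcases Finset.mem_insert.mp hv with rfl | hvF
  · rw [Finset.erase_insert hxF]; exact hF.1
  rw [Finset.erase_insert_of_ne (show x ≠ v from fun h => hxF (h ▸ hvF))]
  refine hb.insert_mem_of_subset_closedNbhd hpm.1 (hpm.1.2 F hF.1 _ (Finset.erase_subset v F))
    ?_ (fun h => hxF (Finset.mem_of_mem_erase h)) fun w hw => hFx w (Finset.mem_of_mem_erase hw)
  rw [Finset.card_erase_of_mem hvF, hpm.card_facet hF, Nat.add_sub_cancel]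

theorem exists_mem_inter_notMem_closedNbhd (hpm : Pseudomanifold K d) (hb : Banner K d)
    {F G : Finset V} (h : (antistarFacetGraph K d x).Adj F G) :
    ∃ z ∈ F ∩ G, z ∉ closedNbhd K x := by
  obtain ⟨hFG, hF, hG, hxF, hxG, hcard⟩ := h
  by_contra! hFGx
  have hσ : F ∩ G ∈ K := hpm.1.2 F hF.1 _ Finset.inter_subset_left
  have hxσ : x ∉ F ∩ G := fun h => hxF (Finset.mem_of_mem_inter_left h)
  have hR : IsFacet K (insert x (F ∩ G)) := hpm.isFacet_of_card
    (hb.insert_mem_of_subset_closedNbhd hpm.1 hσ hcard hxσ hFGx)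
    (by rw [Finset.card_insert_of_notMem hxσ, hcard])
  exact hFG (hpm.eq_of_ridge_subset hσ hcard hF hG hR Finset.inter_subset_left
    Finset.inter_subset_right (Finset.subset_insert x _)
    (fun h => hxF (h ▸ Finset.mem_insert_self x _))
    fun h => hxG (h ▸ Finset.mem_insert_self x _))

theorem antistar_reachable_of_subset (hpm : Pseudomanifold K d) {σ P Q : Finset V}
    (hP : IsFacet K P) (hQ : IsFacet K Q) (hxP : x ∉ P) (hxQ : x ∉ Q) (hcard : σ.card = d)
    (hσP : σ ⊆ P) (hσQ : σ ⊆ Q) : (antistarFacetGraph K d x).Reachable P Q := by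
  by_cases hPQ : P = Q
  · exact hPQ ▸ .refl P
  refine SimpleGraph.Adj.reachable ⟨hPQ, hP, hQ, hxP, hxQ, le_antisymm ?_ ?_⟩
  · have hlt : (P ∩ Q).card < P.card := Finset.card_lt_card <|
      Finset.ssubset_iff_subset_ne.mpr ⟨Finset.inter_subset_left,
        fun h => hPQ (hP.2 Q hQ.1 (Finset.inter_eq_left.mp h)).symm⟩
    rw [hpm.card_facet hP] at hlt
    omega
  · exact hcard ▸ Finset.card_le_card (Finset.subset_inter hσP hσQ)

theorem degree_linkGraph [Fintype V] (hpm : Pseudomanifold K d) {π : Finset V}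
    [DecidableRel (linkGraph K π).Adj] (hπ : π.card + 1 = d) (v : V) :
    (linkGraph K π).degree v = 0 ∨ (linkGraph K π).degree v = 2 := by
  by_cases hv : ∃ w, (linkGraph K π).Adj v w
  swap
  · exact .inl <| Nat.eq_zero_of_not_pos <|
      mt ((linkGraph K π).degree_pos_iff_exists_adj v).mp hv
  right
  obtain ⟨w, -, hvπ, -, hvw⟩ := hv
  set σ := insert v π
  have hσ : σ ∈ K :=
    hpm.1.2 _ hvw.1 _ (Finset.insert_subset_insert v (Finset.subset_insert w π))
  have hcard : σ.card = d := by rw [Finset.card_insert_of_notMem hvπ, hπ]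
  obtain ⟨A, B, hAB, hfacets⟩ := Set.ncard_eq_two.mp (hpm.2.2.1 σ hσ hcard)
  have hext : ∀ F ∈ ({A, B} : Set (Finset V)), ∃ a ∉ σ, insert a σ = F := fun F hF => by
    rw [← hfacets] at hF
    exact Finset.exists_eq_insert_iff.mpr ⟨hF.2, by rw [hcard, hpm.card_facet hF.1]⟩
  obtain ⟨a, haσ, rfl⟩ := hext A (by simp)
  obtain ⟨b, hbσ, rfl⟩ := hext B (by simp)
  have hab : a ≠ b := fun h => hAB (h ▸ rfl)
  suffices (linkGraph K π).neighborFinset v = {a, b} by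
    rw [← SimpleGraph.card_neighborFinset_eq_degree, this, Finset.card_pair hab]
  have key : ∀ c ∉ σ, IsFacet K (insert c σ) ↔ c = a ∨ c = b := fun c hc => by
    simpa [Finset.subset_insert, Finset.insert_inj hc] using Set.ext_iff.mp hfacets (insert c σ)
  ext c
  rw [SimpleGraph.mem_neighborFinset, Finset.mem_insert, Finset.mem_singleton]
  constructor
  · rintro ⟨hvc, -, hcπ, hF⟩
    have hcσ : c ∉ σ := by simp [σ, hcπ, Ne.symm hvc]
    exact (key c hcσ).mp (by rwa [Finset.insert_comm] at hF)
  · intro hc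
    have hcσ : c ∉ σ := by rcases hc with rfl | rfl <;> assumption
    obtain ⟨hcv, hcπ⟩ : c ≠ v ∧ c ∉ π := by simpa [σ] using hcσ
    exact ⟨Ne.symm hcv, hvπ, hcπ, by rw [Finset.insert_comm]; exact (key c hcσ).mpr hc⟩

theorem antistar_reachable_of_reachable_linkGraph (hpm : Pseudomanifold K d) {π : Finset V}
    (hπ : π.card + 1 = d) (hxπ : x ∉ π) {a c : V}
    (hac : ((linkGraph K π).deleteIncidenceSet x).Reachable a c) (haπ : a ∉ π)
    {C C' : Finset V} (hC : IsFacet K C) (hxC : x ∉ C) (haC : insert a π ⊆ C)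
    (hC' : IsFacet K C') (hxC' : x ∉ C') (hcC' : insert c π ⊆ C') :
    (antistarFacetGraph K d x).Reachable C C' := by
  obtain ⟨p⟩ := hac
  induction p generalizing C with
  | nil =>
    exact hpm.antistar_reachable_of_subset hC hC' hxC hxC'
      (by rw [Finset.card_insert_of_notMem haπ, hπ]) haC hcC'
  | @cons a b c hab p ih =>
    obtain ⟨⟨-, -, hbπ, hF⟩, hax, hbx⟩ := SimpleGraph.deleteIncidenceSet_adj.mp hab
    have hxF : x ∉ insert a (insert b π) := by simp [Ne.symm hax, Ne.symm hbx, hxπ]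
    refine (hpm.antistar_reachable_of_subset hC hF hxC hxF
      (by rw [Finset.card_insert_of_notMem haπ, hπ]) haC
      (Finset.insert_subset_insert a (Finset.subset_insert b π))).trans ?_
    exact ih hbπ hF hxF (Finset.insert_subset_insert b (Finset.subset_insert a π) |>.trans
      (Finset.insert_comm b a π).subset) hcC'

theorem antistar_reachable_of_mem_inter [Fintype V] (hpm : Pseudomanifold K d)
    {H H' A A' : Finset V} (hH : IsFacet K H) (hH' : IsFacet K H') (hcard : (H ∩ H').card = d)
    (hx : x ∈ H ∩ H') (hA : IsFacet K A) (hxA : x ∉ A) (hHA : H.erase x ⊆ A)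
    (hA' : IsFacet K A') (hxA' : x ∉ A') (hHA' : H'.erase x ⊆ A') :
    (antistarFacetGraph K d x).Reachable A A' := by
  classical
  obtain ⟨π, hxπ, hρ⟩ : ∃ π, x ∉ π ∧ insert x π = H ∩ H' :=
    ⟨_, Finset.notMem_erase x _, Finset.insert_erase hx⟩
  have hπ : π.card + 1 = d := by rw [← Finset.card_insert_of_notMem hxπ, hρ, hcard]
  have apex : ∀ F, IsFacet K F → insert x π ⊆ F →
      ∃ f ∉ π, F = insert x (insert f π) ∧ (linkGraph K π).Adj x f := fun F hF hπF => by
    obtain ⟨f, hf, rfl⟩ := Finset.exists_eq_insert_iff.mpr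
      ⟨hπF, by rw [hpm.card_facet hF, Finset.card_insert_of_notMem hxπ, hπ]⟩
    obtain ⟨hfx, hfπ⟩ : f ≠ x ∧ f ∉ π := by simpa using hf
    rw [Finset.insert_comm] at hF ⊢
    exact ⟨f, hfπ, rfl, hfx.symm, hxπ, hfπ, hF⟩
  obtain ⟨f, hfπ, rfl, hxf⟩ := apex H hH (hρ ▸ Finset.inter_subset_left)
  obtain ⟨g, hgπ, rfl, hxg⟩ := apex H' hH' (hρ ▸ Finset.inter_subset_right)
  have hfg : f ≠ g := by
    rintro rfl
    rw [Finset.inter_self, hpm.card_facet hH] at hcard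
    omega
  rw [Finset.erase_insert (by simp [hxf.1, hxπ])] at hHA
  rw [Finset.erase_insert (by simp [hxg.1, hxπ])] at hHA'
  -- `f` and `g` are the two neighbours of `x` on a cycle of the link of `π`.
  have hfg_link := (linkGraph K π).reachable_deleteIncidenceSet_of_degree_zero_or_two
    (hpm.degree_linkGraph hπ) hxf hxg hfg
  exact hpm.antistar_reachable_of_reachable_linkGraph hπ hxπ hfg_link hfπ hA hxA hHA
    hA' hxA' hHA'

theorem antistar_reachable_of_card_inter [Fintype V] (hpm : Pseudomanifold K d)
    {H H' A A' : Finset V} (hH : IsFacet K H) (hH' : IsFacet K H') (hcard : (H ∩ H').card = d)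
    (hA : IsFacet K A) (hxA : x ∉ A) (hHA : H.erase x ⊆ A)
    (hA' : IsFacet K A') (hxA' : x ∉ A') (hHA' : H'.erase x ⊆ A') :
    (antistarFacetGraph K d x).Reachable A A' := by
  by_cases hx : x ∈ H ∩ H'
  · exact hpm.antistar_reachable_of_mem_inter hH hH' hcard hx hA hxA hHA hA' hxA' hHA'
  have hsub : ∀ {F}, H ∩ H' ⊆ F → H ∩ H' ⊆ F.erase x := fun hF _ hv =>
    Finset.mem_erase.mpr ⟨fun h => hx (h ▸ hv), hF hv⟩
  exact hpm.antistar_reachable_of_subset hA hA' hxA hxA' hcard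
    ((hsub Finset.inter_subset_left).trans hHA) ((hsub Finset.inter_subset_right).trans hHA')

/-- Barnette's lemma. -/
theorem antistar_reachable [Fintype V] (hpm : Pseudomanifold K d) {P Q : Finset V}
    (hP : IsFacet K P) (hQ : IsFacet K Q) (hxP : x ∉ P) (hxQ : x ∉ Q) :
    (antistarFacetGraph K d x).Reachable P Q := by
  obtain ⟨p⟩ := hpm.2.2.2.preconnected ⟨P, hP⟩ ⟨Q, hQ⟩
  suffices ∀ {H G} (p : (facetGraph K d).Walk H G), x ∉ G.1 → ∀ {A}, IsFacet K A → x ∉ A →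
      H.1.erase x ⊆ A → (antistarFacetGraph K d x).Reachable A G from
    this p hxQ hP hxP (Finset.erase_subset x P)
  intro H G p hxG
  induction p with
  | @nil G =>
    intro A hA _ hGA
    rw [Finset.erase_eq_of_notMem hxG] at hGA
    rw [G.2.2 A hA.1 hGA]
  | @cons H H' _ hHH' _ ih =>
    intro A hA hxA hHA
    obtain ⟨A', hA', hxA', hHA'⟩ := hpm.exists_antistar_facet_superset_erase (x := x) H'.2
    exact (hpm.antistar_reachable_of_card_inter H.2 H'.2 hHH'.2 hA hxA hHA
      hA' hxA' hHA').trans (ih hxG hA' hxA' hHA')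

theorem induce_skeleton_reachable_of_antistar_reachable (hpm : Pseudomanifold K d)
    (hb : Banner K d) {P Q : Finset V} (hPQ : (antistarFacetGraph K d x).Reachable P Q)
    (hQ : Q ∈ K) {z w : V} (hz : z ∉ closedNbhd K x) (hw : w ∉ closedNbhd K x) (hzP : z ∈ P)
    (hwQ : w ∈ Q) : ((skeleton K).induce (closedNbhd K x)ᶜ).Reachable ⟨z, hz⟩ ⟨w, hw⟩ := by
  obtain ⟨p⟩ := hPQ
  induction p generalizing z with
  | nil => exact hpm.1.induce_skeleton_reachable_of_mem_face hQ hz hw hzP hwQ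
  | cons hPP' _ ih =>
    obtain ⟨t, ht, htx⟩ := hpm.exists_mem_inter_notMem_closedNbhd hb hPP'
    exact (hpm.1.induce_skeleton_reachable_of_mem_face hPP'.2.1.1 hz htx hzP
      (Finset.mem_of_mem_inter_left ht)).trans
      (ih hQ htx (Finset.mem_of_mem_inter_right ht) hwQ)

end Pseudomanifold

/-- In a banner pseudomanifold on vertex set `V`, the subgraph of the 1-skeleton induced
on the complement of the closed neighborhood `N(x)` is nonempty and connected. -/
theorem outside_nbhd_connected (K : Set (Finset V)) (d : ℕ) [Fintype V]
    (hpm : Pseudomanifold K d) (hb : Banner K d) (hvert : ∀ v : V, IsVertex K v) (x : V) :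
    ((closedNbhd K x)ᶜ : Set V).Nonempty ∧
      ((skeleton K).induce ((closedNbhd K x)ᶜ : Set V)).Connected := by
  obtain ⟨H, hH, -⟩ := hpm.2.1.1 _ (hvert x)
  obtain ⟨A, hA, hxA, -⟩ := hpm.exists_antistar_facet_superset_erase (x := x) hH
  obtain ⟨z, -, hz⟩ := hpm.exists_mem_notMem_closedNbhd hb hA hxA
  have : Nonempty ((closedNbhd K x)ᶜ : Set V) := ⟨⟨z, hz⟩⟩
  refine ⟨⟨z, hz⟩, ⟨fun ⟨u, hu⟩ ⟨w, hw⟩ => ?_⟩⟩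
  obtain ⟨P, hP, hxP, huP⟩ := hpm.exists_antistar_facet_mem (hvert u) hu
  obtain ⟨Q, hQ, hxQ, hwQ⟩ := hpm.exists_antistar_facet_mem (hvert w) hw
  exact hpm.induce_skeleton_reachable_of_antistar_reachable hb
    (hpm.antistar_reachable hP hQ hxP hxQ) hQ.1 hu hw huP hwQ
end

section
/- Let Δ be a d-dimensional normal simplicial pseudomanifold that is banner. Then the 1-skeleton graph of Δ is 2d-connected. -/
open Finset

variable {V : Type*} [DecidableEq V]

/-!
The proof is an induction on `d`, with links of vertices (again normal banner pseudomanifolds, of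
dimension `d - 1`) carrying the induction.

For `d = 1` the complex is a cycle, and a parity count (every degree is even) shows that removing
one vertex, or the two ends of an edge, leaves it connected.

For `d ≥ 2` let `T`, with `|T| < 2d`, be a minimal separating set. Each `s ∈ T` has
neighbours on two sides, which `T ∩ N(s)` separates inside the link of `s`; by induction
`|T ∩ N(s)| ≥ 2d - 2`, so `T` is a clique on `2d - 1` vertices. A path of facets from one side
to the other crosses a ridge `σ ⊆ T`, and since `T` is a clique the banner property makes every
vertex of `T \ σ` the apex of the second facet through `σ`. So `2d - 1 ≤ d + 1`, i.e. `d = 2`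
and `T` is a triangle; but a triangle through `s` cuts only an edge from the cycle that is the
link of `s`.

The bound `2d + 2` on the number of vertices comes from the same induction: a vertex, its at least
`2d` neighbours, and the vertex opposite to it across a ridge, which bannerness keeps non-adjacent.
-/

open SimpleGraph

section Graph

variable {W : Type*} {G G' : SimpleGraph W} {U U' : Set W} {s u v w : W}

/-- Reachability along walks inside `U`; the empty walk counts even at a vertex outside `U`. -/
def ReachIn (G : SimpleGraph W) (U : Set W) : W → W → Prop :=
  Relation.ReflTransGen fun a b => G.Adj a b ∧ a ∈ U ∧ b ∈ U

namespace ReachIn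

@[refl] theorem refl (u : W) : ReachIn G U u u := Relation.ReflTransGen.refl

theorem of_adj (h : G.Adj u v) (hu : u ∈ U) (hv : v ∈ U) : ReachIn G U u v :=
  Relation.ReflTransGen.single ⟨h, hu, hv⟩

theorem trans (h : ReachIn G U u v) (h' : ReachIn G U v w) : ReachIn G U u w :=
  Relation.ReflTransGen.trans h h'

theorem symm (h : ReachIn G U u v) : ReachIn G U v u := by
  induction h with
  | refl => rfl
  | tail _ hr ih => exact (of_adj hr.1.symm hr.2.2 hr.2.1).trans ih

theorem mono (hG : G ≤ G') (hU : U ⊆ U') (h : ReachIn G U u v) : ReachIn G' U' u v :=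
  Relation.ReflTransGen.mono (fun _ _ hr => ⟨hG hr.1, hU hr.2.1, hU hr.2.2⟩) _ _ h

theorem exists_adj_of_not_reachIn_diff (h : ReachIn G U u v) (hv : v ≠ s)
    (hs : ¬ ReachIn G (U \ {s}) u v) :
    ∃ w, G.Adj s w ∧ w ∈ U \ {s} ∧ ReachIn G (U \ {s}) w v := by
  suffices key : (ReachIn G (U \ {s}) u v ∧ (u = v ∨ u ∈ U \ {s})) ∨
      ∃ w, G.Adj s w ∧ w ∈ U \ {s} ∧ ReachIn G (U \ {s}) w v from
    key.resolve_left fun h' => hs h'.1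
  clear hs
  induction h using Relation.ReflTransGen.head_induction_on with
  | refl => exact Or.inl ⟨refl v, Or.inl rfl⟩
  | head hxy _ ih =>
    rename_i x y _
    rcases ih with ⟨hyv, hy⟩ | hw
    · have hys : y ≠ s := by rintro rfl; rcases hy with rfl | hy; exacts [hv rfl, hy.2 rfl]
      have hyU : y ∈ U \ {s} := ⟨hxy.2.2, hys⟩
      by_cases hxs : x = s
      · subst hxs
        exact Or.inr ⟨y, hxy.1, hyU, hyv⟩
      · have hxU : x ∈ U \ {s} := ⟨hxy.2.1, hxs⟩
        exact Or.inl ⟨(of_adj hxy.1 hxU hyU).trans hyv, Or.inr hxU⟩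
    · exact Or.inr hw

end ReachIn

theorem connected_induce_iff_reachIn :
    (G.induce U).Connected ↔ U.Nonempty ∧ ∀ u ∈ U, ∀ v ∈ U, ReachIn G U u v := by
  refine ⟨fun h => ⟨?_, fun u hu v hv => ?_⟩, fun ⟨⟨u₀, hu₀⟩, h⟩ => ?_⟩
  · obtain ⟨u₀⟩ := h.nonempty
    exact ⟨u₀, u₀.2⟩
  · have hr := reachable_iff_reflTransGen _ _ |>.mp (h.preconnected ⟨u, hu⟩ ⟨v, hv⟩)
    exact Relation.ReflTransGen.lift Subtype.val (fun a b hab => ⟨hab, a.2, b.2⟩) _ _ hr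
  · refine connected_iff _ |>.mpr ⟨fun ⟨u, hu⟩ ⟨v, hv⟩ => ?_, ⟨⟨u₀, hu₀⟩⟩⟩
    induction h u hu v hv with
    | refl => rfl
    | tail _ hr ih => exact (ih hr.2.1).trans (Adj.reachable hr.1)

def Separates (G : SimpleGraph W) (U : Set W) (T : Finset W) : Prop :=
  ∃ u ∈ U \ ↑T, ∃ v ∈ U \ ↑T, ¬ ReachIn G (U \ ↑T) u v

/-- Unlike `KConnected`, this imposes no lower bound on the size of `U`. -/
def KConnectedOn (G : SimpleGraph W) (U : Set W) (k : ℕ) : Prop :=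
  ∀ T : Finset W, T.card < k → ¬ Separates G U T

theorem Minimal.exists_adj_not_reachIn [DecidableEq W] {T : Finset W}
    (hT : Minimal (Separates G U) T) (hs : s ∈ T) :
    ∃ w w', G.Adj s w ∧ G.Adj s w' ∧ w ∈ U \ ↑T ∧ w' ∈ U \ ↑T ∧
      ¬ ReachIn G (U \ ↑T) w w' := by
  obtain ⟨u, hu, v, hv, huv⟩ := hT.prop
  have hdiff : (U \ (T.erase s : Set W)) \ {s} = U \ ↑T := by
    ext z
    by_cases hz : z = s <;> simp [hz, hs]
  have hsub : U \ ↑T ⊆ U \ (T.erase s : Set W) :=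
    Set.sdiff_subset_sdiff_right (by simp)
  have hreach : ReachIn G (U \ (T.erase s : Set W)) u v := by
    by_contra h
    exact hT.not_prop_of_lt (erase_ssubset hs) ⟨u, hsub hu, v, hsub hv, h⟩
  have hne : ∀ z ∈ U \ ↑T, z ≠ s := by
    rintro z hz rfl
    exact hz.2 hs
  obtain ⟨w', hsw', hw', hw'v⟩ :=
    hreach.exists_adj_of_not_reachIn_diff (hne v hv) (by rwa [hdiff])
  obtain ⟨w, hsw, hw, hwu⟩ :=
    hreach.symm.exists_adj_of_not_reachIn_diff (hne u hu) (by rw [hdiff]; exact fun h => huv h.symm)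
  rw [hdiff] at hw hw' hwu hw'v
  exact ⟨w, w', hsw, hsw', hw, hw', fun h => huv ((hwu.symm.trans h).trans hw'v)⟩

section Finite

variable [Fintype W] [DecidableEq W] [DecidableRel G.Adj]

theorem even_sum_card_neighborFinset_inter (C : Finset W) :
    Even (∑ z ∈ C, #(G.neighborFinset z ∩ C)) := by
  have h := (G.induce (C : Set W)).sum_degrees_eq_twice_card_edges
  simp_rw [← card_neighborFinset_eq_degree] at h
  have hdeg (v : (C : Set W)) :
      #((G.induce (C : Set W)).neighborFinset v) = #(G.neighborFinset v ∩ C) := by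
    rw [← card_map (.subtype _)]
    congr 1
    ext
    simp
  simp_rw [hdeg] at h
  rw [← sum_coe_sort C]
  exact ⟨_, h.trans (two_mul _)⟩

theorem even_sum_card_neighborFinset_inter_of_subset (heven : ∀ z, Even (G.degree z))
    {C D : Finset W} (hCD : Disjoint C D) (hsub : ∀ z ∈ C, G.neighborFinset z ⊆ C ∪ D) :
    Even (∑ z ∈ C, #(G.neighborFinset z ∩ D)) := by
  have hsplit : ∀ z ∈ C,
      G.degree z = #(G.neighborFinset z ∩ C) + #(G.neighborFinset z ∩ D) := fun z hz => by
    rw [← card_neighborFinset_eq_degree, ← card_union_of_disjoint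
      (hCD.mono inter_subset_right inter_subset_right),
      ← inter_union_distrib_left, inter_eq_left.2 (hsub z hz)]
  have : Even (∑ z ∈ C, G.degree z) := even_sum _ fun z _ => heven z
  rw [sum_congr rfl hsplit, sum_add_distrib] at this
  exact (Nat.even_add.1 this).1 (even_sum_card_neighborFinset_inter _)

theorem sum_card_neighborFinset_inter_compl (D : Finset W) :
    ∑ z ∈ Dᶜ, #(G.neighborFinset z ∩ D) = ∑ t ∈ D, #(G.neighborFinset t \ D) := by
  convert sum_card_bipartiteAbove_eq_sum_card_bipartiteBelow G.Adj (s := Dᶜ) (t := D)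
    using 3 with z - t -
  · ext; simp [bipartiteAbove, and_comm]
  · ext; simp [bipartiteBelow, adj_comm, and_comm]

/-- The sum is even, and nonzero since otherwise `C` would contain everything reachable from
`w`. -/
theorem two_le_sum_card_neighborFinset_inter (heven : ∀ z, Even (G.degree z)) {C D : Finset W}
    (hCD : Disjoint C D) (hclosed : ∀ z ∈ C, ∀ t, G.Adj z t → t ∉ D → t ∈ C) {w o : W}
    (hw : w ∈ C) (ho : o ∉ C) (hwo : ReachIn G U w o) :
    2 ≤ ∑ z ∈ C, #(G.neighborFinset z ∩ D) := by
  obtain ⟨k, hk⟩ := even_sum_card_neighborFinset_inter_of_subset heven hCD fun z hz t ht => by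
    rw [mem_neighborFinset] at ht
    by_cases htD : t ∈ D
    exacts [mem_union_right _ htD, mem_union_left _ (hclosed z hz t ht htD)]
  by_contra! hlt
  have he0 : ∑ z ∈ C, #(G.neighborFinset z ∩ D) = 0 := by omega
  have hnoD {z t} (hz : z ∈ C) (ht : G.Adj z t) : t ∉ D := fun htD =>
    (card_pos.2 ⟨t, mem_inter.2 ⟨(G.mem_neighborFinset z t).2 ht, htD⟩⟩).ne'
      (sum_eq_zero_iff.1 he0 z hz)
  refine ho ?_
  clear ho
  induction hwo with
  | refl => exact hw
  | tail _ hr ih => exact hclosed _ ih _ hr.1 (hnoD ih hr.1)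

/-- Each component of `U \ D` receives at least two edges from `D`. -/
theorem not_separates_of_even_degree (hU : G.support ⊆ U) (heven : ∀ z, Even (G.degree z))
    (hconn : ∀ u ∈ U, ∀ v ∈ U, ReachIn G U u v) {D : Finset W}
    (hD : ∑ t ∈ D, #(G.neighborFinset t \ D) < 4) : ¬ Separates G U D := by
  classical
  rintro ⟨u, hu, v, hv, huv⟩
  let C (w : W) : Finset W := {z | z ∈ U \ ↑D ∧ ReachIn G (U \ ↑D) w z}
  have mem_C {w z} : z ∈ C w ↔ z ∈ U \ ↑D ∧ ReachIn G (U \ ↑D) w z := by simp [C]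
  have hcompl {w} : C w ⊆ Dᶜ := fun z hz => mem_compl.2 (mem_C.1 hz).1.2
  have he_pos {w o} (hw : w ∈ U \ ↑D) (ho : o ∈ U \ ↑D) (hwo : ¬ ReachIn G (U \ ↑D) w o) :
      2 ≤ ∑ z ∈ C w, #(G.neighborFinset z ∩ D) := by
    refine two_le_sum_card_neighborFinset_inter heven
      (disjoint_left.2 fun z hz => mem_compl.1 (hcompl hz)) (fun z hz t ht htD => ?_)
      (mem_C.2 ⟨hw, .refl w⟩) (fun h => hwo (mem_C.1 h).2) (hconn w hw.1 o ho.1)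
    have htU : t ∈ U \ ↑D := ⟨hU ⟨z, ht.symm⟩, htD⟩
    exact mem_C.2 ⟨htU, (mem_C.1 hz).2.trans (.of_adj ht (mem_C.1 hz).1 htU)⟩
  have hdisj : Disjoint (C u) (C v) := disjoint_left.2 fun z hzu hzv =>
    huv ((mem_C.1 hzu).2.trans (mem_C.1 hzv).2.symm)
  have := he_pos hu hv huv
  have := he_pos hv hu fun h => huv h.symm
  have := calc
      ∑ z ∈ C u, #(G.neighborFinset z ∩ D) + ∑ z ∈ C v, #(G.neighborFinset z ∩ D)
      = ∑ z ∈ C u ∪ C v, #(G.neighborFinset z ∩ D) := (sum_union hdisj).symm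
    _ ≤ ∑ z ∈ Dᶜ, #(G.neighborFinset z ∩ D) :=
      sum_le_sum_of_subset (union_subset hcompl hcompl)
    _ = ∑ t ∈ D, #(G.neighborFinset t \ D) := sum_card_neighborFinset_inter_compl D
  omega

end Finite

end Graph

namespace Set

variable {α : Type*} {A : Set α} {a b c : α}

theorem exists_ne_mem_of_ncard_eq_two (h : A.ncard = 2) (ha : a ∈ A) : ∃ b ∈ A, b ≠ a := by
  obtain ⟨p, q, hpq, rfl⟩ := ncard_eq_two.1 h
  rcases ha with rfl | rfl
  exacts [⟨q, by simp, hpq.symm⟩, ⟨p, by simp, hpq⟩]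

theorem eq_or_eq_of_ncard_eq_two (h : A.ncard = 2) (ha : a ∈ A) (hb : b ∈ A) (hab : a ≠ b)
    (hc : c ∈ A) : c = a ∨ c = b := by
  obtain ⟨p, q, hpq, rfl⟩ := ncard_eq_two.1 h
  simp only [mem_insert_iff, mem_singleton_iff] at ha hb hc
  rcases ha with rfl | rfl <;> rcases hb with rfl | rfl <;> rcases hc with rfl | rfl <;> tauto

end Set

variable {K L : Set (Finset V)} {σ τ ρ D F G : Finset V} {a b x y z : V} {d k m : ℕ}

def verts (K : Set (Finset V)) : Set V := {x | IsVertex K x}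

namespace IsComplex

omit [DecidableEq V] in
theorem mem_of_subset (hK : IsComplex K) (hσ : σ ∈ K) (h : τ ⊆ σ) : τ ∈ K :=
  hK.2 σ hσ τ h

omit [DecidableEq V] in
theorem empty_mem (hK : IsComplex K) : ∅ ∈ K :=
  hK.1.elim fun _ hσ => hK.mem_of_subset hσ (empty_subset _)

omit [DecidableEq V] in
theorem isVertex_of_mem (hK : IsComplex K) (hσ : σ ∈ K) (hx : x ∈ σ) : IsVertex K x :=
  hK.mem_of_subset hσ (singleton_subset_iff.2 hx)

theorem pair_mem (hK : IsComplex K) (hσ : σ ∈ K) (hx : x ∈ σ) (hy : y ∈ σ) :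
    {x, y} ∈ K :=
  hK.mem_of_subset hσ (insert_subset hx (singleton_subset_iff.2 hy))

theorem isCliqueIn_of_subset (hK : IsComplex K) (hσ : σ ∈ K) (h : τ ⊆ σ) :
    IsCliqueIn K τ :=
  fun _ hu _ hv _ => hK.pair_mem hσ (h hu) (h hv)

theorem support_skeleton_subset (hK : IsComplex K) : (skeleton K).support ⊆ verts K :=
  fun _ ⟨_, h⟩ => hK.isVertex_of_mem h.2 (mem_insert_self _ _)

theorem reachIn_of_mem {U : Set V} (hK : IsComplex K) (hσ : σ ∈ K) (hx : x ∈ σ)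
    (hy : y ∈ σ) (hxU : x ∈ U) (hyU : y ∈ U) : ReachIn (skeleton K) U x y := by
  obtain rfl | hxy := eq_or_ne x y
  · rfl
  · exact .of_adj ⟨hxy, hK.pair_mem hσ hx hy⟩ hxU hyU

end IsComplex

theorem isCliqueIn_insert :
    IsCliqueIn K (insert a τ) ↔ IsCliqueIn K τ ∧ ∀ v ∈ τ, v ≠ a → {a, v} ∈ K := by
  refine ⟨fun h => ⟨fun u hu v hv => h u (mem_insert_of_mem hu) v
    (mem_insert_of_mem hv), fun v hv hva => h a (mem_insert_self _ _) v
    (mem_insert_of_mem hv) hva.symm⟩, fun ⟨hτ, ha⟩ u hu v hv huv => ?_⟩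
  rcases mem_insert.1 hu with rfl | hu' <;> rcases mem_insert.1 hv with rfl | hv'
  · exact absurd rfl huv
  · exact ha v hv' (Ne.symm huv)
  · rw [pair_comm]; exact ha u hu' huv
  · exact hτ u hu' v hv' huv

namespace PureCplx

omit [DecidableEq V] in
theorem isFacet_of_card (hp : PureCplx K d) (hσ : σ ∈ K) (hc : σ.card = d + 1) :
    IsFacet K σ := by
  refine ⟨hσ, fun G hG hσG => ?_⟩
  obtain ⟨F, hF, hGF⟩ := hp.1 G hG
  have := eq_of_subset_of_card_le (hσG.trans hGF) (by rw [hp.2 F hF, hc])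
  exact Subset.antisymm (this ▸ hGF) hσG

theorem exists_eq_insert (hp : PureCplx K d) (hF : IsFacet K F) (hσF : σ ⊆ F)
    (hc : σ.card = d) : ∃ b ∉ σ, F = insert b σ := by
  obtain ⟨b, hb⟩ := card_eq_one.1 (by
    rw [card_sdiff_of_subset hσF, hp.2 F hF, hc]; omega : (F \ σ).card = 1)
  refine ⟨b, (mem_sdiff.1 (hb ▸ mem_singleton_self b)).2, ?_⟩
  rw [← sdiff_union_of_subset hσF, hb, insert_eq]

end PureCplx


section Link

theorem mem_link_singleton : τ ∈ link K {x} ↔ x ∉ τ ∧ insert x τ ∈ K := by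
  show Disjoint τ {x} ∧ τ ∪ {x} ∈ K ↔ _
  rw [disjoint_singleton_right, union_comm, ← insert_eq]

theorem isVertex_link_singleton : IsVertex (link K {x}) z ↔ (skeleton K).Adj x z := by
  rw [IsVertex, mem_link_singleton, mem_singleton]
  exact Iff.rfl

theorem isComplex_link (hK : IsComplex K) (hσ : σ ∈ K) : IsComplex (link K σ) :=
  ⟨⟨∅, disjoint_empty_left _, by rwa [empty_union]⟩,
    fun _ ⟨hd, hu⟩ _ hρ =>
      ⟨hd.mono_left hρ, hK.mem_of_subset hu (union_subset_union_left hρ)⟩⟩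

theorem IsComplex.mem_of_mem_link (hK : IsComplex K) (h : τ ∈ link K σ) : τ ∈ K :=
  hK.mem_of_subset h.2 subset_union_left

theorem IsComplex.skeleton_link_le (hK : IsComplex K) : skeleton (link K σ) ≤ skeleton K :=
  fun _ _ h => ⟨h.1, hK.mem_of_subset h.2.2 subset_union_left⟩

theorem link_link (h : Disjoint τ σ) : link (link K σ) τ = link K (τ ∪ σ) := by
  ext ρ
  simp only [link, Set.mem_ofPred_eq, disjoint_union_right, disjoint_union_left,
    union_assoc]
  constructor
  · rintro ⟨hρτ, ⟨hρσ, -⟩, hmem⟩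
    exact ⟨⟨hρτ, hρσ⟩, hmem⟩
  · rintro ⟨⟨hρτ, hρσ⟩, hmem⟩
    exact ⟨hρτ, ⟨hρσ, h⟩, hmem⟩

theorem isFacet_link_of_subset (hσF : σ ⊆ F) (hF : IsFacet K F) :
    IsFacet (link K σ) (F \ σ) := by
  refine ⟨⟨sdiff_disjoint, by rw [sdiff_union_of_subset hσF]; exact hF.1⟩, ?_⟩
  rintro G ⟨hGσ, hG⟩ hFG
  have : G ∪ σ = F := hF.2 _ hG fun a ha => by
    by_cases haσ : a ∈ σ
    · exact mem_union_right _ haσ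
    · exact mem_union_left _ (hFG (mem_sdiff.2 ⟨ha, haσ⟩))
  rw [← this, union_sdiff_cancel_right hGσ]

theorem isFacet_link_iff (hp : PureCplx K d) :
    IsFacet (link K σ) G ↔ Disjoint G σ ∧ IsFacet K (G ∪ σ) := by
  refine ⟨fun hG => ?_, fun ⟨hGσ, hF⟩ => ?_⟩
  · obtain ⟨F, hF, hsub⟩ := hp.1 _ hG.1.2
    have hσF : σ ⊆ F := subset_union_right.trans hsub
    have hGF : F \ σ = G := hG.2 _ (isFacet_link_of_subset hσF hF).1
      (subset_sdiff.2 ⟨subset_union_left.trans hsub, hG.1.1⟩)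
    rw [← hGF, sdiff_union_of_subset hσF]
    exact ⟨sdiff_disjoint, hF⟩
  · simpa [union_sdiff_cancel_right hGσ] using
      isFacet_link_of_subset subset_union_right hF

theorem pureCplx_link (hp : PureCplx K d) (hσ : σ.card + k = d) :
    PureCplx (link K σ) k := by
  refine ⟨fun τ ⟨hτσ, hτ⟩ => ?_, fun G hG => ?_⟩
  · obtain ⟨F, hF, hsub⟩ := hp.1 _ hτ
    exact ⟨F \ σ, isFacet_link_of_subset (subset_union_right.trans hsub) hF,
      subset_sdiff.2 ⟨subset_union_left.trans hsub, hτσ⟩⟩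
  · obtain ⟨hGσ, hF⟩ := (isFacet_link_iff hp).1 hG
    have := hp.2 _ hF
    rw [card_union_of_disjoint hGσ] at this
    omega

theorem ncard_facets_link (hp : PureCplx K d) (hρ : ρ ∈ link K σ) :
    {G | IsFacet (link K σ) G ∧ ρ ⊆ G}.ncard =
      {F | IsFacet K F ∧ ρ ∪ σ ⊆ F}.ncard := by
  have himage : {G | IsFacet (link K σ) G ∧ ρ ⊆ G} =
      (· \ σ) '' {F | IsFacet K F ∧ ρ ∪ σ ⊆ F} := by
    ext G
    refine ⟨fun ⟨hG, hρG⟩ => ?_, ?_⟩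
    · obtain ⟨hGσ, hF⟩ := (isFacet_link_iff hp).1 hG
      exact ⟨G ∪ σ, ⟨hF, union_subset_union_left hρG⟩,
        union_sdiff_cancel_right hGσ⟩
    · rintro ⟨F, ⟨hF, hsub⟩, rfl⟩
      exact ⟨isFacet_link_of_subset (subset_union_right.trans hsub) hF,
        subset_sdiff.2 ⟨subset_union_left.trans hsub, hρ.1⟩⟩
  rw [himage]
  refine Set.InjOn.ncard_image fun F₁ h₁ F₂ h₂ h => ?_
  rw [← sdiff_union_of_subset (subset_union_right.trans h₁.2),
    ← sdiff_union_of_subset (subset_union_right.trans h₂.2)]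
  exact congrArg (· ∪ σ) h

end Link

section StrongConnectivity

theorem ComplexConnected.reachIn (h : ComplexConnected K) :
    ∀ u ∈ verts K, ∀ v ∈ verts K, ReachIn (skeleton K) (verts K) u v :=
  (connected_induce_iff_reachIn.1 h).2

theorem isFacet_link_singleton_iff (hp : PureCplx K d) {H : Finset V} :
    IsFacet (link K {z}) H ↔ z ∉ H ∧ IsFacet K (insert z H) := by
  rw [isFacet_link_iff hp, disjoint_singleton_right, union_comm, ← insert_eq]

theorem facetGraph_connected_of_pure_zero (hL : IsComplex L) (hp : PureCplx L 0) :
    (facetGraph L 0).Connected := by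
  obtain ⟨F₀, hF₀, -⟩ := hp.1 ∅ hL.empty_mem
  refine (connected_iff _).2 ⟨fun A B => ?_, ⟨⟨F₀, hF₀⟩⟩⟩
  obtain rfl | hAB := eq_or_ne A B
  · rfl
  refine Adj.reachable ⟨hAB, ?_⟩
  obtain ⟨a, ha⟩ := card_eq_one.1 (hp.2 _ A.2)
  obtain ⟨b, hb⟩ := card_eq_one.1 (hp.2 _ B.2)
  have hab : a ≠ b := by
    rintro rfl
    exact hAB (Subtype.ext (ha.trans hb.symm))
  simp [ha, hb, hab]

def facetGraphLinkHom (hp : PureCplx L (k + 1)) (z : V) :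
    facetGraph (link L {z}) k →g facetGraph L (k + 1) where
  toFun H := ⟨insert z H, ((isFacet_link_singleton_iff hp).1 H.2).2⟩
  map_rel' {H₁ H₂} h := by
    have hz₁ := ((isFacet_link_singleton_iff hp).1 H₁.2).1
    have hz₂ := ((isFacet_link_singleton_iff hp).1 H₂.2).1
    refine ⟨fun h' => h.1 (Subtype.ext ?_), ?_⟩
    · rw [← erase_insert hz₁, ← erase_insert hz₂]
      exact congrArg (erase · z) (congrArg Subtype.val h')
    · show (insert z H₁.1 ∩ insert z H₂.1).card = k + 1
      rw [← insert_inter_distrib, card_insert_of_notMem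
        fun hz => hz₁ (mem_inter.1 hz).1, h.2]

theorem facetGraph_reachable_of_mem (hp : PureCplx L (k + 1))
    (hz : (facetGraph (link L {z}) k).Connected) {A B : {F // IsFacet L F}} (hzA : z ∈ A.1)
    (hzB : z ∈ B.1) : (facetGraph L (k + 1)).Reachable A B := by
  have lift (C : {F // IsFacet L F}) (hzC : z ∈ C.1) :
      ∃ H, facetGraphLinkHom hp z H = C := by
    refine ⟨⟨C.1.erase z, (isFacet_link_singleton_iff hp).2
      ⟨notMem_erase z _, by rw [insert_erase hzC]; exact C.2⟩⟩, ?_⟩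
    exact Subtype.ext (insert_erase hzC)
  obtain ⟨H₁, rfl⟩ := lift A hzA
  obtain ⟨H₂, rfl⟩ := lift B hzB
  exact (hz.preconnected H₁ H₂).map _

/-- Walk along an edge path between vertices of the two facets, passing through the stars of
its vertices. -/
theorem facetGraph_connected_of_link (hL : IsComplex L) (hp : PureCplx L (k + 1))
    (hconn : ComplexConnected L)
    (hlink : ∀ z, IsVertex L z → (facetGraph (link L {z}) k).Connected) :
    (facetGraph L (k + 1)).Connected := by
  obtain ⟨F₀, hF₀, -⟩ := hp.1 ∅ hL.empty_mem
  refine (connected_iff _).2 ⟨fun A B => ?_, ⟨⟨F₀, hF₀⟩⟩⟩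
  obtain ⟨a, ha⟩ := card_pos.1 (by rw [hp.2 _ A.2]; omega : 0 < A.1.card)
  obtain ⟨b, hb⟩ := card_pos.1 (by rw [hp.2 _ B.2]; omega : 0 < B.1.card)
  have hvert {C : {F // IsFacet L F}} {c} (hc : c ∈ C.1) : IsVertex L c :=
    hL.isVertex_of_mem C.2.1 hc
  suffices ∀ y, ReachIn (skeleton L) (verts L) a y →
      ∀ C : {F // IsFacet L F}, y ∈ C.1 → (facetGraph L (k + 1)).Reachable A C from
    this b (hconn.reachIn a (hvert ha) b (hvert hb)) B hb
  intro y hy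
  induction hy with
  | refl => exact fun C hC => facetGraph_reachable_of_mem hp (hlink a (hvert ha)) ha hC
  | tail _ hyz ih =>
    intro C hzC
    obtain ⟨D, hD, hyzD⟩ := hp.1 _ hyz.1.2
    have hyD := hyzD (mem_insert_self _ _)
    have hzD := hyzD (mem_insert_of_mem (mem_singleton_self _))
    exact (ih ⟨D, hD⟩ hyD).trans
      (facetGraph_reachable_of_mem hp (hlink _ (hvert hzC)) hzD hzC)

theorem facetGraph_link_connected (hK : IsComplex K) (hp : PureCplx K d)
    (hnorm : ∀ σ ∈ K, σ.card + 1 ≤ d → ComplexConnected (link K σ)) :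
    ∀ k σ, σ ∈ K → σ.card + k = d → (facetGraph (link K σ) k).Connected := by
  intro k
  induction k with
  | zero =>
    exact fun σ hσ hc => facetGraph_connected_of_pure_zero (isComplex_link hK hσ)
      (pureCplx_link hp hc)
  | succ k ih =>
    intro σ hσ hc
    refine facetGraph_connected_of_link (isComplex_link hK hσ) (pureCplx_link hp hc)
      (hnorm σ hσ (by omega)) fun z hz => ?_
    rw [link_link hz.1]
    exact ih _ hz.2 (by rw [card_union_of_disjoint hz.1, card_singleton]; omega)

theorem NormalPM.link_singleton (hn : NormalPM K (m + 1)) (hx : IsVertex K x) :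
    NormalPM (link K {x}) m := by
  obtain ⟨⟨hK, hp, hridge, -⟩, hnorm⟩ := hn
  have hcard : ({x} : Finset V).card + m = m + 1 := by simp [add_comm]
  refine ⟨⟨isComplex_link hK hx, pureCplx_link hp hcard, fun ρ hρ hc => ?_,
    facetGraph_link_connected hK hp hnorm m {x} hx hcard⟩, fun τ hτ hc => ?_⟩
  · rw [ncard_facets_link hp hρ]
    exact hridge _ hρ.2 (by rw [card_union_of_disjoint hρ.1]; simpa using hc)
  · rw [link_link hτ.1]
    exact hnorm _ hτ.2 (by rw [card_union_of_disjoint hτ.1]; simpa using hc)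

end StrongConnectivity

namespace Banner

theorem mem_link_singleton_of_isCliqueIn (hK : IsComplex K) (hb : Banner K (m + 1)) (hm : 1 ≤ m)
    {T : Finset V} (hT : IsCliqueIn (link K {x}) T) (hc : T.card = m + 1)
    (hcrit : IsCritical (link K {x}) T) : T ∈ link K {x} := by
  -- each `u ∈ T` lies in an edge of `T`, and the cone of `x` over that edge is a face
  have hxT : ∀ u ∈ T, x ≠ u ∧ {x, u} ∈ K := by
    intro u hu
    obtain ⟨v, hv, hvu⟩ := exists_mem_ne (by omega : 1 < T.card) u
    obtain ⟨hx, hxuv⟩ := mem_link_singleton.1 (hT u hu v hv hvu.symm)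
    exact ⟨by rintro rfl; simp at hx, hK.pair_mem hxuv (by simp) (by simp)⟩
  have hx : x ∉ T := fun h => (hxT x h).1 rfl
  obtain ⟨v, hv, hvT⟩ := hcrit
  refine mem_link_singleton.2 ⟨hx, hb.1 _ ?_ (by rw [card_insert_of_notMem hx, hc]) ?_⟩
  · exact isCliqueIn_insert.2 ⟨fun u hu v hv huv => hK.mem_of_mem_link (hT u hu v hv huv),
      fun v hv _ => (hxT v hv).2⟩
  · refine ⟨v, mem_insert_of_mem hv, ?_⟩
    rw [erase_insert_of_ne (hxT v hv).1]
    exact (mem_link_singleton.1 hvT).2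

theorem not_containsSimplexBoundary_link_singleton (hK : IsComplex K) (hb : Banner K (m + 1))
    (hm : 1 ≤ m) : ¬ ContainsSimplexBoundary (link K {x}) m := by
  rintro ⟨S, hc, hS⟩
  have hproper {τ} (hτ : τ ⊆ S) (hlt : τ.card < m + 2) : τ ∈ link K {x} :=
    hS τ hτ fun h => by rw [h, hc] at hlt; omega
  have hxS : x ∉ S := fun h =>
    (mem_link_singleton.1 (hproper (singleton_subset_iff.2 h) (by simp))).1 (by simp)
  refine hb.2 ⟨insert x S, by rw [card_insert_of_notMem hxS, hc], fun τ hτ hne => ?_⟩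
  by_cases hxτ : x ∈ τ
  · have hsub : τ.erase x ⊆ S := fun z hz =>
      (mem_insert.1 (hτ (mem_of_mem_erase hz))).resolve_left (ne_of_mem_erase hz)
    have hne' : τ.erase x ≠ S := fun h => hne (by rw [← h, insert_erase hxτ])
    have := (mem_link_singleton.1 (hS _ hsub hne')).2
    rwa [insert_erase hxτ] at this
  have hτS : τ ⊆ S := fun z hz => (mem_insert.1 (hτ hz)).resolve_left fun h => hxτ (h ▸ hz)
  by_cases hτS' : τ = S
  · -- `S` itself is a critical clique of `K`
    subst hτS'
    obtain ⟨v, hv⟩ := card_pos.1 (by omega : 0 < τ.card)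
    refine hb.1 τ (fun u hu w hw huw => hK.mem_of_mem_link (hproper ?_ ?_)) (by omega)
      ⟨v, hv, hK.mem_of_mem_link (hproper (erase_subset _ _) ?_)⟩
    · exact insert_subset hu (singleton_subset_iff.2 hw)
    · rw [card_pair huw]; omega
    · rw [card_erase_of_mem hv]; omega
  · exact hK.mem_of_mem_link (hS τ hτS hτS')

theorem link_singleton (hK : IsComplex K) (hb : Banner K (m + 1)) (hm : 1 ≤ m) :
    Banner (link K {x}) m :=
  ⟨fun _ hT hc hcrit => hb.mem_link_singleton_of_isCliqueIn hK hm hT hc hcrit,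
    hb.not_containsSimplexBoundary_link_singleton hK hm⟩

/-- `a b (σ - s)` is a clique, and a critical one since `b (σ - s)` is a face. -/
theorem insert_insert_erase_mem (hK : IsComplex K) (hb : Banner K d) (hc : σ.card = d)
    (ha : insert a σ ∈ K) (hb' : insert b σ ∈ K) (haσ : a ∉ σ) (hbσ : b ∉ σ)
    (hab : a ≠ b) (habK : {a, b} ∈ K) {s : V} (hs : s ∈ σ) :
    insert a (insert b (σ.erase s)) ∈ K := by
  have hbX : b ∉ σ.erase s := fun h => hbσ (mem_of_mem_erase h)
  have haX : a ∉ insert b (σ.erase s) := by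
    simp only [mem_insert, mem_erase, not_or]
    exact ⟨hab, fun h => haσ h.2⟩
  have hX : insert b (σ.erase s) ⊆ insert b σ := insert_subset_insert _ (erase_subset _ _)
  refine hb.1 _ (isCliqueIn_insert.2 ⟨hK.isCliqueIn_of_subset hb' hX, fun v hv _ => ?_⟩)
    ?_ ⟨a, mem_insert_self _ _, ?_⟩
  · rcases mem_insert.1 hv with rfl | hv
    · exact habK
    · exact hK.pair_mem ha (mem_insert_self _ _) (mem_insert_of_mem (mem_of_mem_erase hv))
  · rw [card_insert_of_notMem haX, card_insert_of_notMem hbX, card_erase_of_mem hs, hc]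
    have := card_pos.2 ⟨s, hs⟩
    omega
  · rw [erase_insert haX]
    exact hK.mem_of_subset hb' hX

/-- Otherwise `σ ∪ {a, b}` would span the boundary of a `(d+1)`-simplex. -/
theorem pair_not_mem (hK : IsComplex K) (hb : Banner K d) (hc : σ.card = d)
    (ha : insert a σ ∈ K) (hb' : insert b σ ∈ K) (haσ : a ∉ σ) (hbσ : b ∉ σ)
    (hab : a ≠ b) : {a, b} ∉ K := by
  intro habK
  have haS : a ∉ insert b σ := by simp [hab, haσ]
  refine hb.2 ⟨insert a (insert b σ), by rw [card_insert_of_notMem haS,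
    card_insert_of_notMem hbσ, hc], fun τ hτ hne => ?_⟩
  by_cases haτ : a ∈ τ
  swap
  · exact hK.mem_of_subset hb' fun z hz =>
      (mem_insert.1 (hτ hz)).resolve_left fun h => haτ (h ▸ hz)
  by_cases hbτ : b ∈ τ
  swap
  · refine hK.mem_of_subset ha fun z hz => ?_
    rcases mem_insert.1 (hτ hz) with rfl | hz'
    · exact mem_insert_self _ _
    · exact mem_insert_of_mem ((mem_insert.1 hz').resolve_left fun h => hbτ (h ▸ hz))
  obtain ⟨s, hs, hsτ⟩ : ∃ s ∈ σ, s ∉ τ := by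
    by_contra! h
    exact hne (Subset.antisymm hτ (insert_subset haτ (insert_subset hbτ h)))
  refine hK.mem_of_subset (insert_insert_erase_mem hK hb hc ha hb' haσ hbσ hab habK hs)
    fun z hz => ?_
  have hzs : z ≠ s := fun h => hsτ (h ▸ hz)
  have := hτ hz
  simp only [mem_insert, mem_erase] at this ⊢
  tauto

theorem eq_or_eq_of_isCliqueIn_insert (hK : IsComplex K) (hp : PureCplx K d) (hb : Banner K d)
    (hridge : {F | IsFacet K F ∧ σ ⊆ F}.ncard = 2) (hc : σ.card = d)
    (ha : IsFacet K (insert a σ)) (hb' : IsFacet K (insert b σ)) (haσ : a ∉ σ) (hab : a ≠ b)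
    {w : V} (hwσ : w ∉ σ) (hw : IsCliqueIn K (insert w σ)) : w = a ∨ w = b := by
  have hσ : σ ∈ K := hK.mem_of_subset ha.1 (subset_insert _ _)
  have hcard : (insert w σ).card = d + 1 := by rw [card_insert_of_notMem hwσ, hc]
  have hwK := hb.1 _ hw hcard ⟨w, mem_insert_self _ _, by rwa [erase_insert hwσ]⟩
  have hne : insert a σ ≠ insert b σ := fun h => by
    have := h ▸ mem_insert_self a σ
    simp only [mem_insert] at this
    tauto
  rcases Set.eq_or_eq_of_ncard_eq_two hridge ⟨ha, subset_insert _ _⟩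
      ⟨hb', subset_insert _ _⟩ hne ⟨hp.isFacet_of_card hwK hcard, subset_insert _ _⟩
    with h | h
  all_goals
    have := h ▸ mem_insert_self w σ
    simp only [mem_insert] at this
    tauto

theorem sdiff_subset_singleton (hK : IsComplex K) (hp : PureCplx K d) (hb : Banner K d)
    (hridge : {F | IsFacet K F ∧ σ ⊆ F}.ncard = 2) (hc : σ.card = d)
    (ha : IsFacet K (insert a σ)) (hb' : IsFacet K (insert b σ)) (hab : a ≠ b) {T : Finset V}
    (hσT : σ ⊆ T) (haT : a ∉ T) (hT : IsCliqueIn K T) : T \ σ ⊆ {b} := fun w hw => by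
  obtain ⟨hwT, hwσ⟩ := mem_sdiff.1 hw
  have hwσT : insert w σ ⊆ T := insert_subset hwT hσT
  rcases hb.eq_or_eq_of_isCliqueIn_insert hK hp hridge hc ha hb' (fun h => haT (hσT h)) hab hwσ
      (fun x hx y hy => hT x (hwσT hx) y (hwσT hy)) with rfl | rfl
  · exact absurd hwT haT
  · exact mem_singleton_self _

end Banner

theorem link_empty : link K ∅ = K := by
  ext τ
  simp [link]

theorem NormalPM.complexConnected (hn : NormalPM K (m + 1)) : ComplexConnected K := by
  simpa [link_empty] using hn.2 ∅ hn.1.1.empty_mem (by simp)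

section DimensionOne

variable [Fintype V]

open Classical

theorem degree_skeleton_eq_zero (hK : IsComplex K) (hz : ¬ IsVertex K z) :
    (skeleton K).degree z = 0 := by
  rw [← card_neighborFinset_eq_degree, card_eq_zero,
    eq_empty_iff_forall_notMem]
  exact fun t ht => hz (hK.support_skeleton_subset ⟨t, (mem_neighborFinset _ _ _).1 ht⟩)

/-- The neighbours of `x` correspond to the two edges through the ridge `{x}`. -/
theorem degree_skeleton_eq_two (hn : Pseudomanifold K 1) (hx : IsVertex K x) :
    (skeleton K).degree x = 2 := by
  obtain ⟨hK, hp, hridge, -⟩ := hn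
  have hedges :
      {F | IsFacet K F ∧ {x} ⊆ F} = (fun z => {x, z}) '' (skeleton K).neighborSet x := by
    ext F
    refine ⟨fun ⟨hF, hxF⟩ => ?_, ?_⟩
    · obtain ⟨z, hz, rfl⟩ := hp.exists_eq_insert hF hxF (card_singleton x)
      refine ⟨z, ⟨fun h => hz (by simp [h]), ?_⟩, pair_comm _ _⟩
      rw [pair_comm]
      exact hF.1
    · rintro ⟨z, hz, rfl⟩
      exact ⟨hp.isFacet_of_card hz.2 (card_pair hz.1), by simp⟩
  have hinj : Set.InjOn (fun z => ({x, z} : Finset V)) ((skeleton K).neighborSet x) := by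
    intro z hz z' hz' h
    have : z ∈ ({x, z'} : Finset V) := by
      rw [← show ({x, z} : Finset V) = {x, z'} from h]
      simp
    simp only [mem_insert, mem_singleton] at this
    exact this.resolve_left (Ne.symm hz.1)
  rw [← card_neighborFinset_eq_degree, neighborFinset_def,
    ← Set.ncard_eq_toFinset_card', ← hinj.ncard_image, ← hedges, hridge {x} hx (by simp)]

theorem degree_skeleton_le_two (hn : Pseudomanifold K 1) (z : V) : (skeleton K).degree z ≤ 2 := by
  by_cases hz : IsVertex K z
  · exact (degree_skeleton_eq_two hn hz).le
  · rw [degree_skeleton_eq_zero hn.1 hz]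
    omega

theorem not_separates_of_dim_one (hn : NormalPM K 1) {D : Finset V}
    (hD : ∑ t ∈ D, #((skeleton K).neighborFinset t \ D) ≤ 2) :
    ¬ Separates (skeleton K) (verts K) D := by
  refine not_separates_of_even_degree hn.1.1.support_skeleton_subset (fun z => ?_)
    (NormalPM.complexConnected (m := 0) hn).reachIn (by omega)
  by_cases hz : IsVertex K z
  · rw [degree_skeleton_eq_two hn.1 hz]; exact even_two
  · rw [degree_skeleton_eq_zero hn.1.1 hz]; exact ⟨0, rfl⟩

theorem kConnectedOn_of_dim_one (hn : NormalPM K 1) :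
    KConnectedOn (skeleton K) (verts K) 2 := by
  intro S hS
  refine not_separates_of_dim_one hn ?_
  calc ∑ t ∈ S, #((skeleton K).neighborFinset t \ S)
      ≤ ∑ _t ∈ S, 2 := sum_le_sum fun t _ =>
        (card_le_card sdiff_subset).trans
          ((card_neighborFinset_eq_degree _ _).trans_le (degree_skeleton_le_two hn.1 t))
    _ ≤ 2 := by rw [sum_const, smul_eq_mul]; omega

theorem sum_card_neighborFinset_sdiff_le_of_mem (hn : Pseudomanifold K 1) (hD : D ∈ K) :
    ∑ t ∈ D, #((skeleton K).neighborFinset t \ D) ≤ 2 := by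
  obtain ⟨F, hF, hDF⟩ := hn.2.1.1 D hD
  have hDc : D.card ≤ 2 := (card_le_card hDF).trans (hn.2.1.2 F hF).le
  have hterm : ∀ t ∈ D, #((skeleton K).neighborFinset t \ D) ≤ 3 - D.card := by
    intro t ht
    have hsub : D.erase t ⊆ (skeleton K).neighborFinset t := fun u hu =>
      (mem_neighborFinset _ _ _).2
        ⟨(ne_of_mem_erase hu).symm, hn.1.pair_mem hD ht (mem_of_mem_erase hu)⟩
    calc #((skeleton K).neighborFinset t \ D)
        ≤ #((skeleton K).neighborFinset t \ D.erase t) :=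
          card_le_card (sdiff_subset_sdiff subset_rfl (erase_subset _ _))
      _ = (skeleton K).degree t - (D.card - 1) := by
        rw [card_sdiff_of_subset hsub, card_erase_of_mem ht,
          card_neighborFinset_eq_degree]
      _ ≤ 3 - D.card := by
        have := degree_skeleton_le_two hn t
        have := card_pos.2 ⟨t, ht⟩
        omega
  calc ∑ t ∈ D, #((skeleton K).neighborFinset t \ D) ≤ ∑ _t ∈ D, (3 - D.card) :=
        sum_le_sum hterm
    _ ≤ 2 := by
      rw [sum_const, smul_eq_mul]
      interval_cases D.card <;> omega

end DimensionOne

theorem Banner.exists_opposite (hn : Pseudomanifold K (m + 1)) (hb : Banner K (m + 1))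
    (hF : IsFacet K F) (hx : x ∈ F) :
    ∃ b ∉ F, insert b (F.erase x) ∈ K ∧ {x, b} ∉ K := by
  obtain ⟨hK, hp, hridge, -⟩ := hn
  have hc : (F.erase x).card = m + 1 := by rw [card_erase_of_mem hx, hp.2 F hF]; rfl
  have hσ := hK.mem_of_subset hF.1 (erase_subset x F)
  obtain ⟨G, ⟨hG, hσG⟩, hGF⟩ := Set.exists_ne_mem_of_ncard_eq_two (hridge _ hσ hc)
    ⟨hF, erase_subset x F⟩
  obtain ⟨b, hbσ, rfl⟩ := hp.exists_eq_insert hG hσG hc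
  have hbx : b ≠ x := by
    rintro rfl
    exact hGF (by rw [insert_erase hx])
  have hbF : b ∉ F := fun h => hbσ (mem_erase.2 ⟨hbx, h⟩)
  refine ⟨b, hbF, hG.1, hb.pair_not_mem hK hc ?_ hG.1 (notMem_erase x F) hbσ hbx.symm⟩
  rw [insert_erase hx]
  exact hF.1

theorem exists_finset_isVertex_card_four (hn : Pseudomanifold K 1) (hb : Banner K 1) :
    ∃ A : Finset V, (∀ a ∈ A, IsVertex K a) ∧ 4 ≤ A.card := by
  have hK := hn.1
  obtain ⟨F, hF, -⟩ := hn.2.1.1 ∅ hK.empty_mem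
  obtain ⟨x, y, hxy, rfl⟩ := card_eq_two.1 (hn.2.1.2 F hF)
  obtain ⟨b, hbF, hby, -⟩ := hb.exists_opposite (m := 0) hn hF (mem_insert_self x {y})
  obtain ⟨c, hcF, hcx, hyc⟩ :=
    hb.exists_opposite (m := 0) hn hF (by simp : y ∈ ({x, y} : Finset V))
  rw [erase_insert (by simpa using hxy)] at hby
  have hbc : b ≠ c := by
    rintro rfl
    exact hyc (by rwa [pair_comm])
  refine ⟨{x, y, b, c}, fun a ha => ?_, ?_⟩
  · simp only [mem_insert, mem_singleton] at ha
    rcases ha with rfl | rfl | rfl | rfl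
    exacts [hK.isVertex_of_mem hF.1 (by simp), hK.isVertex_of_mem hF.1 (by simp),
      hK.isVertex_of_mem hby (by simp), hK.isVertex_of_mem hcx (by simp)]
  · simp only [mem_insert, mem_singleton, not_or] at hbF hcF
    rw [card_insert_of_notMem (by simp [hxy, Ne.symm hbF.1, Ne.symm hcF.1]),
      card_insert_of_notMem (by simp [Ne.symm hbF.2, Ne.symm hcF.2]),
      card_pair hbc]

theorem exists_finset_isVertex_card_ge (hn : NormalPM K (m + 1)) (hb : Banner K (m + 1)) :
    ∃ A : Finset V, (∀ a ∈ A, IsVertex K a) ∧ 2 * (m + 1) + 2 ≤ A.card := by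
  induction m generalizing K with
  | zero => exact exists_finset_isVertex_card_four hn.1 hb
  | succ m ih =>
    have hK := hn.1.1
    obtain ⟨F, hF, -⟩ := hn.1.2.1.1 ∅ hK.empty_mem
    obtain ⟨x, hx⟩ := card_pos.1 (by rw [hn.1.2.1.2 F hF]; omega : 0 < F.card)
    have hxv := hK.isVertex_of_mem hF.1 hx
    obtain ⟨b, hbF, hbK, hxb⟩ := hb.exists_opposite hn.1 hF hx
    obtain ⟨A, hA, hAc⟩ := ih (hn.link_singleton hxv) (hb.link_singleton hK (by omega))
    have hAN (a) (ha : a ∈ A) : (skeleton K).Adj x a := isVertex_link_singleton.1 (hA a ha)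
    have hbx : b ≠ x := fun h => hbF (h ▸ hx)
    have hxA : x ∉ insert b A := by
      simp only [mem_insert, not_or]
      exact ⟨hbx.symm, fun h => (hAN x h).1 rfl⟩
    refine ⟨insert x (insert b A), fun a ha => ?_, ?_⟩
    · simp only [mem_insert] at ha
      rcases ha with rfl | rfl | ha
      exacts [hxv, hK.isVertex_of_mem hbK (mem_insert_self _ _),
        hK.support_skeleton_subset ⟨x, (hAN a ha).symm⟩]
    · rw [card_insert_of_notMem hxA, card_insert_of_notMem fun h => hxb (hAN b h).2]
      omega

/-- If `T` separates `u` from `v`, then along a path of facets from one to the other some ridge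
is crossed from a facet meeting the component of `u` outside `T` to one that does not; that
ridge lies in `T`. -/
theorem exists_ridge_subset_of_not_reachIn (hK : IsComplex K) (hp : PureCplx K d)
    (hsc : StronglyConnected K d) {T : Finset V} {u v : V} (hu : u ∈ verts K \ ↑T)
    (hv : v ∈ verts K \ ↑T) (huv : ¬ ReachIn (skeleton K) (verts K \ ↑T) u v) :
    ∃ σ ⊆ T, ∃ a b, a ∉ T ∧ a ≠ b ∧ σ.card = d ∧ IsFacet K (insert a σ) ∧
      IsFacet K (insert b σ) := by
  let P : Set {F // IsFacet K F} :=
    {F | ∃ z ∈ F.1, z ∉ T ∧ ReachIn (skeleton K) (verts K \ ↑T) u z}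
  have hout {F : {F // IsFacet K F}} {z} (hz : z ∈ F.1) (hzT : z ∉ T) : z ∈ verts K \ ↑T :=
    ⟨hK.isVertex_of_mem F.2.1 hz, hzT⟩
  obtain ⟨Fu, hFu, huF⟩ := hp.1 {u} hu.1
  obtain ⟨Fv, hFv, hvF⟩ := hp.1 {v} hv.1
  have huP : ⟨Fu, hFu⟩ ∈ P := ⟨u, singleton_subset_iff.1 huF, hu.2, .refl u⟩
  have hvP : ⟨Fv, hFv⟩ ∉ P := fun ⟨z, hz, hzT, hr⟩ => huv (hr.trans
    (hK.reachIn_of_mem hFv.1 hz (singleton_subset_iff.1 hvF) (hout (F := ⟨Fv, hFv⟩) hz hzT) hv))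
  obtain ⟨⟨⟨A, B⟩, ⟨hAB, hc⟩⟩, -, ⟨z, hzA, hzT, hzr⟩, hBP⟩ :=
    (hsc.preconnected ⟨Fu, hFu⟩ ⟨Fv, hFv⟩).some.exists_boundary_dart P huP hvP
  have hσT : A.1 ∩ B.1 ⊆ T := fun y hy => by
    by_contra hyT
    obtain ⟨hyA, hyB⟩ := mem_inter.1 hy
    exact hBP ⟨y, hyB, hyT,
      hzr.trans (hK.reachIn_of_mem A.2.1 hzA hyA (hout hzA hzT) (hout hyA hyT))⟩
  obtain ⟨a, haσ, hA⟩ := hp.exists_eq_insert A.2 inter_subset_left hc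
  obtain ⟨b, -, hB⟩ := hp.exists_eq_insert B.2 inter_subset_right hc
  have hza : z = a := by
    rw [hA] at hzA
    exact (mem_insert.1 hzA).resolve_right fun h => hzT (hσT h)
  subst hza
  refine ⟨_, hσT, z, b, hzT, fun h => hAB (Subtype.ext ?_), hc, hA ▸ A.2, hB ▸ B.2⟩
  exact hA.trans ((congrArg (insert · (A.1 ∩ B.1)) h).trans hB.symm)

section Connectivity

variable [Fintype V]

open Classical

/-- Two neighbours of `s` joined inside its link avoiding `T` are joined in `K` avoiding `T`. -/
theorem le_card_inter_neighborFinset (hK : IsComplex K) {s w w' : V} {T : Finset V}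
    (hlink : KConnectedOn (skeleton (link K {s})) (verts (link K {s})) k)
    (hw : (skeleton K).Adj s w) (hw' : (skeleton K).Adj s w') (hwT : w ∉ T) (hw'T : w' ∉ T)
    (hsep : ¬ ReachIn (skeleton K) (verts K \ ↑T) w w') :
    k ≤ #(T ∩ (skeleton K).neighborFinset s) := by
  by_contra! hlt
  have hout {z} (hz : (skeleton K).Adj s z) (hzT : z ∉ T) :
      z ∈ verts (link K {s}) \ ↑(T ∩ (skeleton K).neighborFinset s) :=
    ⟨isVertex_link_singleton.2 hz, fun h => hzT (mem_inter.1 h).1⟩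
  refine hsep (ReachIn.mono hK.skeleton_link_le (fun z hz => ?_) (not_not.1
    fun h => hlink _ hlt ⟨w, hout hw hwT, w', hout hw' hw'T, h⟩))
  obtain ⟨hz, hzT⟩ := hz
  have hz' := isVertex_link_singleton.1 hz
  exact ⟨hK.support_skeleton_subset ⟨s, hz'.symm⟩, fun h => hzT (mem_inter.2
    ⟨h, (mem_neighborFinset _ _ _).2 hz'⟩)⟩

theorem inter_neighborFinset_subset_erase (T : Finset V) (s : V) :
    T ∩ (skeleton K).neighborFinset s ⊆ T.erase s := fun _ hz =>
  mem_erase.2 ⟨((mem_neighborFinset _ _ _).1 (mem_inter.1 hz).2).1.symm,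
    (mem_inter.1 hz).1⟩

theorem isCliqueIn_of_card_le {T : Finset V}
    (h : ∀ s ∈ T, T.card ≤ #(T ∩ (skeleton K).neighborFinset s) + 1) : IsCliqueIn K T := by
  intro u hu v hv huv
  have heq := eq_of_subset_of_card_le (inter_neighborFinset_subset_erase (K := K) T u)
    (by rw [card_erase_of_mem hu]; have := h u hu; omega)
  have hv' : v ∈ T ∩ (skeleton K).neighborFinset u := heq ▸ mem_erase.2 ⟨huv.symm, hv⟩
  exact ((mem_neighborFinset _ _ _).1 (mem_inter.1 hv').2).2

/-- In a normal 2-pseudomanifold the link of `s` is a cycle, and a face `T ∋ s` cuts from it at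
most an edge, which leaves it connected. -/
theorem reachIn_of_dim_two (hn : NormalPM K 2) {s w w' : V} {T : Finset V} (hT : T ∈ K)
    (hs : s ∈ T) (hw : (skeleton K).Adj s w) (hw' : (skeleton K).Adj s w') (hwT : w ∉ T)
    (hw'T : w' ∉ T) : ReachIn (skeleton K) (verts K \ ↑T) w w' := by
  have hK := hn.1.1
  have hL := hn.link_singleton (hK.isVertex_of_mem hT hs)
  have hD : T.erase s ∈ link K {s} :=
    mem_link_singleton.2 ⟨notMem_erase s T, by rwa [insert_erase hs]⟩
  have hout {z} (hz : (skeleton K).Adj s z) (hzT : z ∉ T) :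
      z ∈ verts (link K {s}) \ ↑(T.erase s) :=
    ⟨isVertex_link_singleton.2 hz, fun h => hzT (mem_of_mem_erase h)⟩
  refine ReachIn.mono hK.skeleton_link_le (fun z hz => ?_) (not_not.1 fun h =>
    not_separates_of_dim_one hL (sum_card_neighborFinset_sdiff_le_of_mem hL.1 hD)
      ⟨w, hout hw hwT, w', hout hw' hw'T, h⟩)
  obtain ⟨hz, hzT⟩ := hz
  have hz' := isVertex_link_singleton.1 hz
  refine ⟨hK.support_skeleton_subset ⟨s, hz'.symm⟩, fun h => hzT ?_⟩
  exact mem_erase.2 ⟨hz'.1.symm, h⟩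

theorem kConnectedOn_of_link (hn : NormalPM K (m + 2)) (hb : Banner K (m + 2))
    (hlink : ∀ x, IsVertex K x →
      KConnectedOn (skeleton (link K {x})) (verts (link K {x})) (2 * (m + 1))) :
    KConnectedOn (skeleton K) (verts K) (2 * (m + 2)) := by
  obtain ⟨⟨hK, hp, hridge, hsc⟩, -⟩ := id hn
  intro S hS hsep
  obtain ⟨T, hTS, hT⟩ := exists_minimal_le_of_wellFoundedLT _ S hsep
  have hTc : T.card < 2 * (m + 2) := (card_le_card hTS).trans_lt hS
  obtain ⟨u, hu, v, hv, huv⟩ := hT.prop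
  have hdeg : ∀ s ∈ T, 2 * (m + 1) ≤ #(T ∩ (skeleton K).neighborFinset s) := fun s hs => by
    obtain ⟨w, w', hw, hw', hwT, hw'T, hww'⟩ := hT.exists_adj_not_reachIn hs
    exact le_card_inter_neighborFinset hK (hlink s (hK.support_skeleton_subset ⟨w, hw⟩))
      hw hw' hwT.2 hw'T.2 hww'
  obtain ⟨σ, hσT, a, b, haT, hab, hσc, ha, hb'⟩ :=
    exists_ridge_subset_of_not_reachIn hK hp hsc hu hv huv
  obtain ⟨s, hs⟩ := card_pos.1 (by omega : 0 < σ.card)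
  have hsT := hσT hs
  have hTc' : T.card = 2 * m + 3 := by
    have := card_le_card (inter_neighborFinset_subset_erase (K := K) T s)
    have := hdeg s hsT
    rw [card_erase_of_mem hsT] at *
    omega
  have hclique : IsCliqueIn K T := isCliqueIn_of_card_le fun t ht => by
    have := hdeg t ht
    omega
  have hσK : σ ∈ K := hK.mem_of_subset ha.1 (subset_insert _ _)
  have hTσ :=
    hb.sdiff_subset_singleton hK hp (hridge σ hσK hσc) hσc ha hb' hab hσT haT hclique
  have hTσc : (T \ σ).card = m + 1 := by rw [card_sdiff_of_subset hσT, hTc', hσc]; omega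
  obtain rfl : m = 0 := by
    have := card_le_card hTσ
    rw [hTσc, card_singleton] at this
    omega
  have hTb : T = insert b σ := by
    rw [← sdiff_union_of_subset hσT, eq_of_subset_of_card_le hTσ (by simp [hTσc]),
      insert_eq]
  obtain ⟨w, w', hw, hw', hwT, hw'T, hww'⟩ := hT.exists_adj_not_reachIn hsT
  exact hww' (reachIn_of_dim_two hn (hTb ▸ hb'.1) hsT hw hw' hwT.2 hw'T.2)

theorem kConnectedOn_skeleton (hn : NormalPM K (m + 1)) (hb : Banner K (m + 1)) :
    KConnectedOn (skeleton K) (verts K) (2 * (m + 1)) := by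
  induction m generalizing K with
  | zero => exact kConnectedOn_of_dim_one hn
  | succ m ih =>
    exact kConnectedOn_of_link hn hb fun x hx =>
      ih (hn.link_singleton hx) (hb.link_singleton hn.1.1 (by omega))

end Connectivity

/-- The 1-skeleton of a banner normal `d`-pseudomanifold (on vertex set `V`) is
`2d`-connected. -/
theorem banner_pm_two_d_connected (K : Set (Finset V)) (d : ℕ) [Fintype V]
    (hn : NormalPM K d) (hb : Banner K d) (hvert : ∀ v : V, IsVertex K v) :
    KConnected (skeleton K) (2 * d) := by
  cases d with
  | zero =>
    obtain ⟨F, hF, -⟩ := hn.1.2.1.1 ∅ hn.1.1.empty_mem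
    obtain ⟨x, -⟩ := card_eq_one.1 (hn.1.2.1.2 F hF)
    exact ⟨Fintype.card_pos_iff.2 ⟨x⟩, fun S hS => absurd hS (Nat.not_lt_zero _)⟩
  | succ m =>
    have hverts : verts K = Set.univ := Set.eq_univ_of_forall hvert
    obtain ⟨A, -, hA⟩ := exists_finset_isVertex_card_ge hn hb
    have hcard : 2 * (m + 1) < Fintype.card V := by
      have := card_le_univ A
      omega
    refine ⟨hcard, fun S hS => ?_⟩
    rw [connected_induce_iff_reachIn, Set.compl_eq_univ_sdiff, ← hverts]
    obtain ⟨z, -, hz⟩ := exists_mem_notMem_of_card_lt_card (s := S) (t := univ)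
      (by rw [card_univ]; omega)
    exact ⟨⟨z, hverts ▸ Set.mem_univ z, hz⟩, fun u hu v hv => not_not.1 fun h =>
      kConnectedOn_skeleton hn hb S hS ⟨u, hu, v, hv, h⟩⟩
end
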